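/- Let G=(V,E) be a finite connected graph with second-largest normalized adjacency eigenvalue μ_2, and let f be an eigenfunction of D^{-1}A with eigenvalue μ and ‖f‖₂ = 1. Let c be the constant function on V with ‖c‖₂ = 1. Then ⟨|f|, c⟩² ≥ 1 − (1+μ)/(1−μ_2). -/

import Mathlib

open Finset Polynomial

noncomputable section
open scoped Classical

/-- The normalized adjacency matrix `D⁻¹A` of a finite graph. -/
def normAdj {V : Type*} [Fintype V] (G : SimpleGraph V) : Matrix V V ℝ :=
  Matrix.of fun u v => if G.Adj u v then ((G.degree u : ℝ))⁻¹ else 0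

/-- The degree-weighted inner product `⟨f,g⟩ = ∑ u, f u * g u * d_u`. -/
def dInner {V : Type*} [Fintype V] (G : SimpleGraph V) (f g : V → ℝ) : ℝ :=
  ∑ u, f u * g u * (G.degree u : ℝ)

/-- The `ℓ²`-norm associated to the degree-weighted inner product. -/
def dNorm {V : Type*} [Fintype V] (G : SimpleGraph V) (f : V → ℝ) : ℝ :=
  Real.sqrt (dInner G f f)

namespace SpecAux

theorem eval_charpoly' {n : Type*} [Fintype n] [DecidableEq n] (M : Matrix n n ℝ) (t : ℝ) :
    (M.charpoly).eval t = (t • (1 : Matrix n n ℝ) - M).det := by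
  rw [Matrix.charpoly, ← Polynomial.coe_evalRingHom, RingHom.map_det]
  congr 1
  ext i j
  by_cases h : i = j <;>
    simp [h, Matrix.charmatrix_apply, Matrix.one_apply, Matrix.diagonal_apply]

theorem det_zero_iff_eigen {n : Type*} [Fintype n] [DecidableEq n] (M : Matrix n n ℝ) (t : ℝ) :
    (t • (1 : Matrix n n ℝ) - M).det = 0 ↔ ∃ x ≠ 0, M.mulVec x = t • x := by
  rw [← Matrix.exists_mulVec_eq_zero_iff]
  constructor
  · rintro ⟨x, hx, hx0⟩
    refine ⟨x, hx, ?_⟩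
    rw [Matrix.sub_mulVec, Matrix.smul_mulVec, Matrix.one_mulVec, sub_eq_zero] at hx0
    exact hx0.symm
  · rintro ⟨x, hx, hx0⟩
    refine ⟨x, hx, ?_⟩
    rw [Matrix.sub_mulVec, Matrix.smul_mulVec, Matrix.one_mulVec, sub_eq_zero, hx0]

theorem charpoly_conj' {n : Type*} [Fintype n] [DecidableEq n] (P Q M : Matrix n n ℝ)
    (h1 : P * Q = 1) : (P * M * Q).charpoly = M.charpoly := by
  have hmap : ∀ A : Matrix n n ℝ, (RingHom.mapMatrix (C : ℝ →+* ℝ[X])) A = A.map C := fun A => rfl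
  have hPQ : P.map C * Q.map C = 1 := by
    rw [← Matrix.map_mul, h1, Matrix.map_one C (map_zero C) (map_one C)]
  have key : Matrix.charmatrix (P * M * Q) =
      P.map C * Matrix.charmatrix M * Q.map C := by
    rw [Matrix.charmatrix, Matrix.charmatrix, mul_sub, sub_mul]
    congr 1
    · rw [Matrix.scalar_apply, ← Matrix.smul_one_eq_diagonal, Matrix.mul_smul, mul_one,
        Matrix.smul_mul, hPQ]
    · rw [map_mul, map_mul, hmap, hmap, hmap]
  have hdet : (P.map C).det * (Q.map C).det = 1 := by
    rw [← Matrix.det_mul, hPQ, Matrix.det_one]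
  rw [Matrix.charpoly, key, Matrix.det_mul, Matrix.det_mul, Matrix.charpoly]
  rw [mul_comm, ← mul_assoc, mul_comm ((Q.map C).det), hdet, one_mul]

theorem charpoly_herm {n : Type*} [Fintype n] [DecidableEq n] (S : Matrix n n ℝ)
    (hS : S.IsHermitian) : S.charpoly = ∏ i, (X - C (hS.eigenvalues i)) := by
  have hsp := hS.spectral_theorem
  set U : Matrix n n ℝ := (hS.eigenvectorUnitary : Matrix n n ℝ) with hU
  have h1 : U * star U = 1 := (Matrix.mem_unitaryGroup_iff).mp hS.eigenvectorUnitary.2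
  have hdiag : Matrix.diagonal ((RCLike.ofReal : ℝ → ℝ) ∘ hS.eigenvalues)
      = Matrix.diagonal hS.eigenvalues := by congr 1
  have h2 := congrArg Matrix.charpoly hsp
  rw [hdiag, Unitary.conjStarAlgAut_apply] at h2
  rw [h2, charpoly_conj' U (star U) _ h1]
  rw [Matrix.charpoly]
  have : Matrix.charmatrix (Matrix.diagonal hS.eigenvalues)
      = Matrix.diagonal (fun i => X - C (hS.eigenvalues i)) := by
    ext i j
    by_cases h : i = j <;> simp [h, Matrix.charmatrix_apply, Matrix.diagonal_apply]
  rw [this, Matrix.det_diagonal]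

variable {V : Type*} [Fintype V] (G : SimpleGraph V)

def Bform (f g : V → ℝ) : ℝ :=
  ∑ u, ∑ v, if G.Adj u v then f u * g v else 0

theorem normAdj_mulVec (x : V → ℝ) (u : V) :
    (normAdj G).mulVec x u = (G.degree u : ℝ)⁻¹ * ∑ v ∈ G.neighborFinset u, x v := by
  rw [Matrix.mulVec, dotProduct]
  rw [SimpleGraph.neighborFinset_eq_filter, Finset.mul_sum]
  rw [← Finset.sum_filter_add_sum_filter_not Finset.univ (G.Adj u)]
  have h2 : ∀ v ∈ Finset.univ.filter (fun v => ¬ G.Adj u v), normAdj G u v * x v = 0 := by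
    intro v hv
    simp only [Finset.mem_filter] at hv
    simp [normAdj, hv.2]
  rw [Finset.sum_eq_zero h2, add_zero]
  apply Finset.sum_congr rfl
  intro v hv
  simp only [Finset.mem_filter] at hv
  simp [normAdj, hv.2, mul_comm]

theorem degree_pos (hconn : G.Connected) (hn : 2 ≤ Fintype.card V) (u : V) :
    0 < G.degree u := by
  rw [G.degree_pos_iff_exists_adj]
  obtain ⟨v, hv⟩ := Fintype.exists_ne_of_one_lt_card (by omega) u
  obtain ⟨p⟩ := hconn u v
  cases p with
  | nil => exact absurd rfl hv.symm
  | cons h _ => exact ⟨_, h⟩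

theorem maxPrinciple (hconn : G.Connected) (hn : 2 ≤ Fintype.card V)
    {t : ℝ} {x : V → ℝ} (hx : x ≠ 0) (he : (normAdj G).mulVec x = t • x) : |t| ≤ 1 := by
  have hne : Nonempty V := Fintype.card_pos_iff.mp (by omega)
  obtain ⟨u, -, hu⟩ := Finset.exists_max_image Finset.univ (fun v => |x v|)
    ⟨Classical.arbitrary V, Finset.mem_univ _⟩
  have hxu : 0 < |x u| := by
    by_contra h
    push_neg at h
    apply hx
    funext v
    have := hu v (Finset.mem_univ v)
    have : |x v| ≤ 0 := le_trans this h
    have h0 : |x v| = 0 := le_antisymm this (abs_nonneg _)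
    simpa using abs_eq_zero.mp h0
  have hdeg : (0:ℝ) < (G.degree u : ℝ) := by exact_mod_cast degree_pos G hconn hn u
  have heq : t * x u = (G.degree u : ℝ)⁻¹ * ∑ v ∈ G.neighborFinset u, x v := by
    have h := congrFun he u
    rw [normAdj_mulVec] at h
    simpa using h.symm
  have hb : |∑ v ∈ G.neighborFinset u, x v| ≤ (G.degree u : ℝ) * |x u| := by
    calc |∑ v ∈ G.neighborFinset u, x v| ≤ ∑ v ∈ G.neighborFinset u, |x v| :=
          Finset.abs_sum_le_sum_abs _ _
    _ ≤ ∑ v ∈ G.neighborFinset u, |x u| :=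
          Finset.sum_le_sum (fun v _ => hu v (Finset.mem_univ v))
    _ = (G.degree u : ℝ) * |x u| := by
          rw [Finset.sum_const, SimpleGraph.card_neighborFinset_eq_degree, nsmul_eq_mul]
  have : |t| * |x u| ≤ |x u| := by
    calc |t| * |x u| = |t * x u| := (abs_mul t (x u)).symm
    _ = |(G.degree u : ℝ)|⁻¹ * |∑ v ∈ G.neighborFinset u, x v| := by
          rw [heq, abs_mul, abs_inv]
    _ ≤ (G.degree u : ℝ)⁻¹ * ((G.degree u : ℝ) * |x u|) := by
          rw [abs_of_pos hdeg]
          exact mul_le_mul_of_nonneg_left hb (by positivity)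
    _ = |x u| := by field_simp
  exact le_of_mul_le_mul_right (by linarith) hxu

theorem rigidity (hconn : G.Connected) (hn : 2 ≤ Fintype.card V)
    {x : V → ℝ} (he : (normAdj G).mulVec x = x) : ∃ K, ∀ u, x u = K := by
  have : Nonempty V := Fintype.card_pos_iff.mp (by omega)
  obtain ⟨u₀, -, hmax⟩ := Finset.exists_max_image Finset.univ x
    ⟨Classical.arbitrary V, Finset.mem_univ _⟩
  set m := x u₀ with hm
  refine ⟨m, fun u => ?_⟩
  have step : ∀ a b, x a = m → G.Adj a b → x b = m := by
    intro a b ha hab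
    have hdeg : (0:ℝ) < (G.degree a : ℝ) := by exact_mod_cast degree_pos G hconn hn a
    have heq : x a = (G.degree a : ℝ)⁻¹ * ∑ v ∈ G.neighborFinset a, x v := by
      have := congrFun he a
      rw [normAdj_mulVec] at this
      exact this.symm
    have hsum : ∑ v ∈ G.neighborFinset a, (m - x v) = 0 := by
      rw [Finset.sum_sub_distrib, Finset.sum_const,
        SimpleGraph.card_neighborFinset_eq_degree, nsmul_eq_mul, sub_eq_zero]
      have : ∑ v ∈ G.neighborFinset a, x v = (G.degree a : ℝ) * x a := by
        rw [heq]; field_simp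
      rw [this, ha]
    have hterm : ∀ v ∈ G.neighborFinset a, 0 ≤ m - x v :=
      fun v _ => sub_nonneg.mpr (hmax v (Finset.mem_univ v))
    have := (Finset.sum_eq_zero_iff_of_nonneg hterm).mp hsum b
      (by rwa [SimpleGraph.mem_neighborFinset])
    linarith
  have walkprop : ∀ {a b : V} (p : G.Walk a b), x a = m → x b = m := by
    intro a b p
    induction p with
    | nil => exact id
    | cons h p ih => exact fun ha => ih (step _ _ ha h)
  obtain ⟨p⟩ := hconn u₀ u
  exact walkprop p rfl

theorem dInner_mulVec (hdeg : ∀ u, 0 < G.degree u) (x y : V → ℝ) :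
    dInner G x ((normAdj G).mulVec y) = Bform G x y := by
  unfold dInner Bform
  apply Finset.sum_congr rfl
  intro u _
  have hd : ((G.degree u : ℝ)) ≠ 0 := by
    have := hdeg u; positivity
  rw [Matrix.mulVec, dotProduct]
  rw [Finset.mul_sum, Finset.sum_mul]
  apply Finset.sum_congr rfl
  intro v _
  by_cases hadj : G.Adj u v
  · simp only [normAdj, Matrix.of_apply, hadj, if_true]
    field_simp
  · simp [normAdj, hadj]

theorem Bform_comm (x y : V → ℝ) : Bform G x y = Bform G y x := by
  unfold Bform
  rw [Finset.sum_comm]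
  apply Finset.sum_congr rfl; intro u _
  apply Finset.sum_congr rfl; intro v _
  by_cases hadj : G.Adj u v
  · simp only [hadj, hadj.symm, if_true]; ring
  · have : ¬ G.Adj v u := fun h => hadj h.symm
    simp only [hadj, this, if_false]

/-- the symmetrized normalized adjacency matrix -/
def symAdj : Matrix V V ℝ :=
  Matrix.of fun u v => if G.Adj u v then
    (Real.sqrt (G.degree u : ℝ) * Real.sqrt (G.degree v : ℝ))⁻¹ else 0

theorem symAdj_isHermitian : (symAdj G).IsHermitian := by
  unfold Matrix.IsHermitian
  ext u v
  simp only [Matrix.conjTranspose_apply, symAdj, Matrix.of_apply, star_trivial]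
  by_cases hadj : G.Adj u v
  · simp [hadj, hadj.symm, mul_comm]
  · have : ¬ G.Adj v u := fun h => hadj h.symm
    simp [hadj, this]

theorem symAdj_mulVec_eq (y : V → ℝ) (u : V) :
    (symAdj G).mulVec y u = (Real.sqrt (G.degree u : ℝ))⁻¹ *
      ∑ v ∈ G.neighborFinset u, y v / Real.sqrt (G.degree v : ℝ) := by
  rw [Matrix.mulVec, dotProduct]
  rw [SimpleGraph.neighborFinset_eq_filter, Finset.mul_sum]
  rw [← Finset.sum_filter_add_sum_filter_not Finset.univ (G.Adj u)]
  have h2 : ∀ v ∈ Finset.univ.filter (fun v => ¬ G.Adj u v), symAdj G u v * y v = 0 := by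
    intro v hv
    simp only [Finset.mem_filter] at hv
    simp [symAdj, hv.2]
  rw [Finset.sum_eq_zero h2, add_zero]
  apply Finset.sum_congr rfl
  intro v hv
  simp only [Finset.mem_filter] at hv
  simp only [symAdj, Matrix.of_apply, hv.2, if_true]
  rw [mul_inv]
  ring

theorem symAdj_pullback (hdeg : ∀ u, 0 < G.degree u) {t : ℝ} {y : V → ℝ}
    (hy : (symAdj G).mulVec y = t • y) :
    (normAdj G).mulVec (fun u => y u / Real.sqrt (G.degree u : ℝ)) =
      t • (fun u => y u / Real.sqrt (G.degree u : ℝ)) := by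
  funext u
  have hd : (0:ℝ) < (G.degree u : ℝ) := by exact_mod_cast hdeg u
  have hsu : (0:ℝ) < Real.sqrt (G.degree u : ℝ) := Real.sqrt_pos.mpr hd
  have hss : Real.sqrt (G.degree u : ℝ) * Real.sqrt (G.degree u : ℝ) = (G.degree u : ℝ) :=
    Real.mul_self_sqrt (le_of_lt hd)
  have h1 := congrFun hy u
  rw [symAdj_mulVec_eq] at h1
  have h2 : ∑ v ∈ G.neighborFinset u, y v / Real.sqrt (G.degree v : ℝ)
      = Real.sqrt (G.degree u : ℝ) * (t * y u) := by
    have := h1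
    simp only [Pi.smul_apply, smul_eq_mul] at this
    field_simp at this ⊢
    linarith [this]
  rw [normAdj_mulVec, h2]
  simp only [Pi.smul_apply, smul_eq_mul]
  field_simp
  rw [Real.sq_sqrt (le_of_lt hd)]

theorem Bform_eq_neighbor (a b : V → ℝ) :
    Bform G a b = ∑ u, ∑ v ∈ G.neighborFinset u, a u * b v := by
  unfold Bform
  apply Finset.sum_congr rfl
  intro u _
  rw [SimpleGraph.neighborFinset_eq_filter, Finset.sum_filter]

theorem sum_mul_symAdj (hdeg : ∀ u, 0 < G.degree u) (a b : V → ℝ) :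
    ∑ u, (Real.sqrt (G.degree u : ℝ) * a u) *
      ((symAdj G).mulVec (fun w => Real.sqrt (G.degree w : ℝ) * b w)) u = Bform G a b := by
  rw [Bform_eq_neighbor]
  apply Finset.sum_congr rfl
  intro u _
  have hd : (0:ℝ) < (G.degree u : ℝ) := by exact_mod_cast hdeg u
  have hsu : (0:ℝ) < Real.sqrt (G.degree u : ℝ) := Real.sqrt_pos.mpr hd
  rw [symAdj_mulVec_eq]
  have h2 : ∑ v ∈ G.neighborFinset u, (Real.sqrt (G.degree v : ℝ) * b v) /
      Real.sqrt (G.degree v : ℝ) = ∑ v ∈ G.neighborFinset u, b v := by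
    apply Finset.sum_congr rfl
    intro v hv
    have hdv : (0:ℝ) < (G.degree v : ℝ) := by exact_mod_cast hdeg v
    have hsv : (0:ℝ) < Real.sqrt (G.degree v : ℝ) := Real.sqrt_pos.mpr hdv
    field_simp
  rw [h2, Finset.mul_sum, Finset.mul_sum]
  apply Finset.sum_congr rfl
  intro v _
  field_simp

theorem sum_symAdj_comm (p q : V → ℝ) :
    ∑ u, p u * ((symAdj G).mulVec q) u = ∑ u, ((symAdj G).mulVec p) u * q u := by
  have expand : ∀ (p q : V → ℝ), ∑ u, p u * ((symAdj G).mulVec q) u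
      = ∑ u, ∑ v, p u * (symAdj G u v * q v) := by
    intro p q
    apply Finset.sum_congr rfl
    intro u _
    rw [Matrix.mulVec, dotProduct, Finset.mul_sum]
  rw [expand]
  have expand2 : ∑ u, ((symAdj G).mulVec p) u * q u
      = ∑ u, ∑ v, (symAdj G u v * p v) * q u := by
    apply Finset.sum_congr rfl
    intro u _
    rw [Matrix.mulVec, dotProduct, Finset.sum_mul]
  rw [expand2, Finset.sum_comm]
  apply Finset.sum_congr rfl
  intro u _
  apply Finset.sum_congr rfl
  intro v _
  have hsym : symAdj G v u = symAdj G u v := by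
    have := symAdj_isHermitian G
    have h := congrFun (congrFun this u) v
    simpa [Matrix.conjTranspose_apply] using h
  rw [hsym]
  ring

theorem const_one_eigen (hdeg : ∀ u, 0 < G.degree u) :
    (normAdj G).mulVec (fun _ => (1:ℝ)) = (1:ℝ) • (fun _ => (1:ℝ)) := by
  funext u
  have hd : (0:ℝ) < (G.degree u : ℝ) := by exact_mod_cast hdeg u
  rw [normAdj_mulVec]
  simp only [Finset.sum_const, SimpleGraph.card_neighborFinset_eq_degree, nsmul_eq_mul,
    Pi.smul_apply, smul_eq_mul, mul_one]
  field_simp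

theorem root_of_eigen {t : ℝ} {x : V → ℝ} (hx : x ≠ 0)
    (he : (normAdj G).mulVec x = t • x)
    {n : ℕ} (hcard : Fintype.card V = n) (μs : Fin n → ℝ)
    (hchar : (normAdj G).charpoly = ∏ i, (X - C (μs i))) :
    ∃ j, t = μs j := by
  have hdet : (t • (1 : Matrix V V ℝ) - normAdj G).det = 0 :=
    (det_zero_iff_eigen (normAdj G) t).mpr ⟨x, hx, he⟩
  have heval : ((normAdj G).charpoly).eval t = 0 := by
    rw [eval_charpoly', hdet]
  rw [hchar, Polynomial.eval_prod] at heval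
  obtain ⟨j, -, hj⟩ := Finset.prod_eq_zero_iff.mp heval
  simp only [Polynomial.eval_sub, Polynomial.eval_X, Polynomial.eval_C, sub_eq_zero] at hj
  exact ⟨j, hj⟩

variable (hconn : G.Connected) (hn : 2 ≤ Fintype.card V)
  (μs : Fin (Fintype.card V) → ℝ) (hanti : Antitone μs)
  (hchar : (normAdj G).charpoly = ∏ i, (X - C (μs i)))

include hconn hn hchar in
theorem eigen_abs_le_one {t : ℝ} (hroot : ∃ j, t = μs j) : |t| ≤ 1 := by
  obtain ⟨j, rfl⟩ := hroot
  have heval : ((normAdj G).charpoly).eval (μs j) = 0 := by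
    rw [hchar, Polynomial.eval_prod]
    refine Finset.prod_eq_zero (Finset.mem_univ j) ?_
    simp
  rw [eval_charpoly'] at heval
  obtain ⟨x, hx, he⟩ := (det_zero_iff_eigen (normAdj G) (μs j)).mp heval
  exact maxPrinciple G hconn hn hx he

include hconn hn hanti hchar in
theorem mu0_eq_one : μs ⟨0, by omega⟩ = 1 := by
  have hdeg := degree_pos G hconn hn
  have hne : Nonempty V := Fintype.card_pos_iff.mp (by omega)
  have hc1 : (fun _ => (1:ℝ)) ≠ (0 : V → ℝ) := by
    intro h
    have := congrFun h (Classical.arbitrary V)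
    simpa using this
  obtain ⟨j, hj⟩ := root_of_eigen G hc1 (const_one_eigen G hdeg) rfl μs hchar
  have h1 : (1:ℝ) ≤ μs ⟨0, by omega⟩ := by
    rw [hj]
    exact hanti (by exact Fin.zero_le j)
  have h2 : μs ⟨0, by omega⟩ ≤ 1 := by
    have := eigen_abs_le_one G hconn hn μs hchar ⟨⟨0, by omega⟩, rfl⟩
    exact le_trans (le_abs_self _) this
  linarith

include hconn hn hanti hchar in
theorem eigen_le_mu2 {t : ℝ} (ht : t ≠ 1) (hroot : ∃ j, t = μs j) :
    t ≤ μs ⟨1, lt_of_lt_of_le one_lt_two hn⟩ := by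
  obtain ⟨j, rfl⟩ := hroot
  by_cases hj0 : j.val = 0
  · exfalso
    apply ht
    have : j = ⟨0, by omega⟩ := Fin.ext hj0
    rw [this]
    exact mu0_eq_one G hconn hn μs hanti hchar
  · exact hanti (by
      show (⟨1, by omega⟩ : Fin (Fintype.card V)) ≤ j
      exact Fin.mk_le_of_le_val (by omega))

include hconn hn in
theorem symAdj_one_eigen {y : V → ℝ} (hy : (symAdj G).mulVec y = (1:ℝ) • y) :
    ∃ K, ∀ u, y u = K * Real.sqrt (G.degree u : ℝ) := by
  have hdeg := degree_pos G hconn hn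
  have hz := symAdj_pullback G hdeg hy
  rw [one_smul] at hz
  obtain ⟨K, hK⟩ := rigidity G hconn hn hz
  refine ⟨K, fun u => ?_⟩
  have hdu : (0:ℝ) < (G.degree u : ℝ) := by exact_mod_cast hdeg u
  have hsu : (0:ℝ) < Real.sqrt (G.degree u : ℝ) := Real.sqrt_pos.mpr hdu
  have := hK u
  field_simp at this
  linarith [this]

include hconn hn hanti hchar in
theorem spec_bound (h : V → ℝ) (horth : dInner G h (fun _ => (1:ℝ)) = 0) :
    dInner G h ((normAdj G).mulVec h) ≤ μs ⟨1, lt_of_lt_of_le one_lt_two hn⟩ * dInner G h h := by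
  have hdeg := degree_pos G hconn hn
  set sq : V → ℝ := fun u => Real.sqrt (G.degree u : ℝ) with hsq
  have hsqpos : ∀ u, 0 < sq u := fun u =>
    Real.sqrt_pos.mpr (by exact_mod_cast hdeg u)
  have hss : ∀ u, sq u * sq u = (G.degree u : ℝ) := fun u =>
    Real.mul_self_sqrt (by positivity)
  have hS := symAdj_isHermitian G
  set e := hS.eigenvectorBasis with he
  set lam := hS.eigenvalues with hlam
  set xf : V → ℝ := fun u => sq u * h u with hxf
  set x : EuclideanSpace ℝ V := (WithLp.equiv 2 (V → ℝ)).symm xf with hx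
  set Sx : EuclideanSpace ℝ V := (WithLp.equiv 2 (V → ℝ)).symm ((symAdj G).mulVec xf) with hSx
  have hinner : ∀ a b : EuclideanSpace ℝ V, (inner ℝ a b : ℝ) = ∑ u, a u * b u := by
    intro a b
    simp [PiLp.inner_apply, RCLike.inner_apply, mul_comm]
  have happ : ∀ u, x u = xf u := fun u => rfl
  have happ2 : ∀ u, Sx u = ((symAdj G).mulVec xf) u := fun u => rfl
  have heig : ∀ i u, ((symAdj G).mulVec (fun w => e i w)) u = lam i * e i u :=
    fun i u => congrFun (hS.mulVec_eigenvectorBasis i) u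
  -- ⟪x, x⟫ = dInner h h
  have hxx : (inner ℝ x x : ℝ) = dInner G h h := by
    rw [hinner]
    unfold dInner
    apply Finset.sum_congr rfl
    intro u _
    rw [happ]
    show sq u * h u * (sq u * h u) = h u * h u * (G.degree u : ℝ)
    rw [← hss u]; ring
  -- ⟪x, Sx⟫ = dInner h (M h)
  have hxSx : (inner ℝ x Sx : ℝ) = dInner G h ((normAdj G).mulVec h) := by
    rw [hinner, dInner_mulVec G hdeg]
    rw [← sum_mul_symAdj G hdeg h h]
    apply Finset.sum_congr rfl
    intro u _
    rw [happ, happ2]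
  -- coefficients
  have hcoef : ∀ i, (inner ℝ (e i) Sx : ℝ) = lam i * (inner ℝ x (e i) : ℝ) := by
    intro i
    rw [hinner, hinner]
    have h1 : ∑ u, (e i) u * Sx u = ∑ u, (fun w => e i w) u * ((symAdj G).mulVec xf) u := by
      apply Finset.sum_congr rfl
      intro u _
      rw [happ2]
    rw [h1, sum_symAdj_comm G]
    rw [Finset.mul_sum]
    apply Finset.sum_congr rfl
    intro u _
    rw [heig i u, happ]
    ring
  -- lam i = 1 → coefficient 0
  have hone : ∀ i, lam i = 1 → (inner ℝ x (e i) : ℝ) = 0 := by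
    intro i hi
    have h2 : (symAdj G).mulVec (fun w => e i w) = (1:ℝ) • (fun w => e i w) := by
      funext u
      have h3 := heig i u
      rw [hi] at h3
      simpa using h3
    obtain ⟨K, hK⟩ := symAdj_one_eigen G hconn hn h2
    rw [hinner]
    have key : ∑ u, x u * (e i) u = K * dInner G h (fun _ => (1:ℝ)) := by
      unfold dInner
      rw [Finset.mul_sum]
      apply Finset.sum_congr rfl
      intro u _
      have hKu : e i u = K * sq u := hK u
      rw [happ, hKu]
      show sq u * h u * (K * sq u) = K * (h u * 1 * (G.degree u : ℝ))
      rw [← hss u]; ring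
    rw [key, horth, mul_zero]
  -- lam i ≠ 1 → lam i ≤ μ₂
  have hle : ∀ i, lam i ≠ 1 → lam i ≤ μs ⟨1, by omega⟩ := by
    intro i hi
    have hnz : (fun w => e i w) ≠ (0 : V → ℝ) := by
      intro hcontra
      have : e i = 0 := by
        apply PiLp.ext
        intro u
        exact congrFun hcontra u
      exact hS.eigenvectorBasis.orthonormal.ne_zero i this
    have h2 : (symAdj G).mulVec (fun w => e i w) = lam i • (fun w => e i w) := by
      funext u
      exact heig i u
    have hz := symAdj_pullback G hdeg h2
    have hznz : (fun u => e i u / Real.sqrt (G.degree u : ℝ)) ≠ (0 : V → ℝ) := by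
      intro hcontra
      apply hnz
      funext u
      have hdiv := congrFun hcontra u
      simp only [Pi.zero_apply] at hdiv ⊢
      have hsu := hsqpos u
      rcases (_root_.div_eq_zero_iff).mp hdiv with h' | h'
      · exact h'
      · exact absurd h' (by positivity)
    have hroot := root_of_eigen G hznz hz rfl μs hchar
    exact eigen_le_mu2 G hconn hn μs hanti hchar hi hroot
  -- Parseval
  have hpar : ∑ i, (inner ℝ x (e i) : ℝ) * (inner ℝ (e i) x : ℝ) = (inner ℝ x x : ℝ) :=
    e.sum_inner_mul_inner x x
  have hexp : (inner ℝ x Sx : ℝ) = ∑ i, (inner ℝ x (e i) : ℝ) * (inner ℝ (e i) Sx : ℝ) :=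
    (e.sum_inner_mul_inner x Sx).symm
  have hcomm : ∀ i, (inner ℝ (e i) x : ℝ) = (inner ℝ x (e i) : ℝ) := by
    intro i
    rw [hinner, hinner]
    apply Finset.sum_congr rfl
    intro u _
    ring
  have hbound : (inner ℝ x Sx : ℝ) ≤ μs ⟨1, by omega⟩ * (inner ℝ x x : ℝ) := by
    rw [hexp, ← hpar, Finset.mul_sum]
    apply Finset.sum_le_sum
    intro i _
    rw [hcoef i, hcomm i]
    by_cases hi : lam i = 1
    · rw [hone i hi]
      simp
    · have hsq' : 0 ≤ (inner ℝ x (e i) : ℝ) * (inner ℝ x (e i) : ℝ) := mul_self_nonneg _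
      have := hle i hi
      nlinarith
  rw [← hxSx, ← hxx]
  exact hbound

include hconn hn hanti hchar in
theorem mu2_lt_one : μs ⟨1, lt_of_lt_of_le one_lt_two hn⟩ < 1 := by
  have hdeg := degree_pos G hconn hn
  have hne : Nonempty V := Fintype.card_pos_iff.mp (by omega)
  by_contra hcon
  push_neg at hcon
  have h0 : μs ⟨0, by omega⟩ = 1 := mu0_eq_one G hconn hn μs hanti hchar
  have h1 : μs ⟨1, by omega⟩ = 1 := by
    have := hanti (show (⟨0, by omega⟩ : Fin (Fintype.card V)) ≤ ⟨1, by omega⟩ by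
      exact Fin.mk_le_mk.mpr (by omega))
    rw [h0] at this
    linarith
  set sq : V → ℝ := fun u => Real.sqrt (G.degree u : ℝ) with hsq
  have hsqpos : ∀ u, 0 < sq u := fun u =>
    Real.sqrt_pos.mpr (by exact_mod_cast hdeg u)
  have hss : ∀ u, sq u * sq u = (G.degree u : ℝ) := fun u =>
    Real.mul_self_sqrt (by positivity)
  have hS := symAdj_isHermitian G
  set e := hS.eigenvectorBasis with he
  set lam := hS.eigenvalues with hlam
  -- similarity: symAdj = P * normAdj * Q
  set P : Matrix V V ℝ := Matrix.diagonal sq with hP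
  set Q : Matrix V V ℝ := Matrix.diagonal (fun u => (sq u)⁻¹) with hQ
  have hPQ : P * Q = 1 := by
    rw [hP, hQ, Matrix.diagonal_mul_diagonal]
    rw [show (fun u => sq u * (sq u)⁻¹) = fun _ => (1:ℝ) by
      funext u; exact mul_inv_cancel₀ (ne_of_gt (hsqpos u))]
    exact Matrix.diagonal_one
  have hsim : symAdj G = P * normAdj G * Q := by
    ext u v
    rw [Matrix.mul_apply]
    have : ∀ w, (P * normAdj G) u w * Q w v = if w = v then (P * normAdj G) u v * (sq v)⁻¹ else 0 := by
      intro w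
      rw [hQ]
      by_cases hwv : w = v
      · subst hwv; simp [Matrix.diagonal_apply_eq]
      · rw [Matrix.diagonal_apply_ne _ hwv, mul_zero, if_neg hwv]
    rw [Finset.sum_congr rfl (fun w _ => this w), Finset.sum_ite_eq' Finset.univ v _]
    simp only [Finset.mem_univ, if_true]
    rw [Matrix.mul_apply]
    have hrow : ∀ w, P u w * normAdj G w v = if w = u then sq u * normAdj G u v else 0 := by
      intro w
      rw [hP]
      by_cases hwu : w = u
      · subst hwu; simp [Matrix.diagonal_apply_eq]
      · rw [Matrix.diagonal_apply_ne _ (fun hq => hwu hq.symm), zero_mul, if_neg hwu]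
    rw [Finset.sum_congr rfl (fun w _ => hrow w), Finset.sum_ite_eq' Finset.univ u _]
    simp only [Finset.mem_univ, if_true]
    by_cases hadj : G.Adj u v
    · simp only [symAdj, normAdj, Matrix.of_apply, hadj, if_true]
      rw [← hss u]
      field_simp
      rw [Real.sqrt_sq (le_of_lt (hsqpos u))]
    · simp [symAdj, normAdj, hadj]
  have hcharS : (symAdj G).charpoly = (normAdj G).charpoly := by
    rw [hsim]
    exact charpoly_conj' P Q _ hPQ
  have hprod : (∏ i, (X - C (lam i))) = ∏ i, (X - C (μs i)) := by
    rw [← charpoly_herm _ hS, hcharS, hchar]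
  -- pass to multisets of roots
  have hmult : (Finset.univ.val.map lam) = (Finset.univ.val.map μs) := by
    have h2 : ((Finset.univ.val.map lam).map (fun a => X - C a)).prod
        = ((Finset.univ.val.map μs).map (fun a => X - C a)).prod := by
      rw [Multiset.map_map, Multiset.map_map]
      rw [← Finset.prod_eq_multiset_prod, ← Finset.prod_eq_multiset_prod]
      exact hprod
    have := congrArg Polynomial.roots h2
    rwa [Polynomial.roots_multiset_prod_X_sub_C, Polynomial.roots_multiset_prod_X_sub_C] at this
  -- count of 1 among μs is ≥ 2
  have hcount : 2 ≤ Multiset.count (1:ℝ) (Finset.univ.val.map μs) := by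
    have hne01 : (⟨0, by omega⟩ : Fin (Fintype.card V)) ≠ ⟨1, by omega⟩ := by
      simp [Fin.ext_iff]
    have hsub : ({(⟨0, by omega⟩ : Fin (Fintype.card V)), ⟨1, by omega⟩} : Finset _).val
        ≤ (Finset.univ : Finset (Fin (Fintype.card V))).val :=
      Finset.val_le_iff.mpr (Finset.subset_univ _)
    have hle2 : Multiset.count (1:ℝ)
        (Multiset.map μs (({(⟨0, by omega⟩ : Fin (Fintype.card V)), ⟨1, by omega⟩} : Finset _).val))
        ≤ Multiset.count (1:ℝ) (Multiset.map μs Finset.univ.val) :=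
      Multiset.count_le_of_le _ (Multiset.map_le_map hsub)
    have hpairval : (({(⟨0, by omega⟩ : Fin (Fintype.card V)), ⟨1, by omega⟩} : Finset _)).val
        = (⟨0, by omega⟩ : Fin (Fintype.card V)) ::ₘ
          ({(⟨1, by omega⟩ : Fin (Fintype.card V))} : Finset _).val :=
      Finset.insert_val_of_notMem (by simpa using hne01)
    rw [hpairval] at hle2
    rw [Finset.singleton_val, Multiset.map_cons, Multiset.map_singleton, h0, h1] at hle2
    rw [Multiset.count_cons_self, Multiset.count_singleton] at hle2
    simpa using hle2
  rw [← hmult] at hcount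
  -- hence two distinct indices with eigenvalue 1
  have hfilter : 2 ≤ (Finset.univ.filter (fun i => (1:ℝ) = lam i)).card := by
    rw [Multiset.count_map] at hcount
    exact hcount
  obtain ⟨a, ha, b, hb, hab⟩ := Finset.one_lt_card.mp (by omega : 1 < (Finset.univ.filter (fun i => (1:ℝ) = lam i)).card)
  simp only [Finset.mem_filter] at ha hb
  have hla : lam a = 1 := ha.2.symm
  have hlb : lam b = 1 := hb.2.symm
  -- both eigenvectors are multiples of sq
  have heig : ∀ i, (symAdj G).mulVec (fun w => e i w) = lam i • (fun w => e i w) := by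
    intro i
    funext u
    exact congrFun (hS.mulVec_eigenvectorBasis i) u
  have getK : ∀ i, lam i = 1 → ∃ K, (∀ u, e i u = K * sq u) ∧ K ≠ 0 := by
    intro i hi
    have h2 : (symAdj G).mulVec (fun w => e i w) = (1:ℝ) • (fun w => e i w) := by
      rw [heig i, hi]
    obtain ⟨K, hK⟩ := symAdj_one_eigen G hconn hn h2
    refine ⟨K, hK, ?_⟩
    intro hK0
    have : e i = 0 := by
      apply PiLp.ext
      intro u
      rw [hK u, hK0, zero_mul]
      rfl
    exact hS.eigenvectorBasis.orthonormal.ne_zero i this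
  obtain ⟨Ka, hKa, hKa0⟩ := getK a hla
  obtain ⟨Kb, hKb, hKb0⟩ := getK b hlb
  have horth : (inner ℝ (e a) (e b) : ℝ) = 0 := hS.eigenvectorBasis.orthonormal.2 hab
  have hinner : (inner ℝ (e a) (e b) : ℝ) = ∑ u, e a u * e b u := by
    simp [PiLp.inner_apply, RCLike.inner_apply, mul_comm]
  have hsum : ∑ u, e a u * e b u = Ka * Kb * ∑ u, (G.degree u : ℝ) := by
    rw [Finset.mul_sum]
    apply Finset.sum_congr rfl
    intro u _
    rw [hKa u, hKb u, ← hss u]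
    ring
  have hpos : 0 < ∑ u, (G.degree u : ℝ) := by
    apply Finset.sum_pos
    · intro u _
      exact_mod_cast hdeg u
    · exact ⟨Classical.arbitrary V, Finset.mem_univ _⟩
  have : Ka * Kb * ∑ u, (G.degree u : ℝ) = 0 := by
    rw [← hsum, ← hinner, horth]
  have hKaKb : Ka * Kb ≠ 0 := mul_ne_zero hKa0 hKb0
  exact absurd this (by positivity)

theorem dInner_comm' (a b : V → ℝ) : dInner G a b = dInner G b a := by
  unfold dInner
  apply Finset.sum_congr rfl
  intro u _
  ring

theorem dInner_sub_smul_left (a b c' : V → ℝ) (t : ℝ) :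
    dInner G (fun u => a u - t * b u) c' = dInner G a c' - t * dInner G b c' := by
  unfold dInner
  rw [Finset.mul_sum, ← Finset.sum_sub_distrib]
  apply Finset.sum_congr rfl
  intro u _
  ring

theorem dInner_self_nonneg (a : V → ℝ) : 0 ≤ dInner G a a := by
  apply Finset.sum_nonneg
  intro u _
  have h1 : 0 ≤ a u * a u := mul_self_nonneg _
  have h2 : (0:ℝ) ≤ (G.degree u : ℝ) := by positivity
  positivity

end SpecAux

/-- **Lemma 3, second inequality**: for a finite connected graph with eigenvalues
`μs (n-1) ≤ ⋯ ≤ μs 1 = μ₂ ≤ μs 0` (listed with multiplicity, in decreasing order, as the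
roots of the characteristic polynomial of `D⁻¹A`), if `f` is an eigenfunction of `D⁻¹A`
with eigenvalue `μ` and `‖f‖₂ = 1`, and `c` is the constant function with `‖c‖₂ = 1`, then
`⟨|f|, c⟩² ≥ 1 - (1+μ)/(1-μ₂)`. -/
theorem inner_abs_const_sq_ge {V : Type*} [Fintype V] (G : SimpleGraph V)
    (hconn : G.Connected) (hn : 2 ≤ Fintype.card V)
    (μs : Fin (Fintype.card V) → ℝ) (hanti : Antitone μs)
    (hchar : (normAdj G).charpoly = ∏ i, (X - C (μs i)))
    (μ : ℝ) (f : V → ℝ) (hf : f ≠ 0) (hfe : (normAdj G).mulVec f = μ • f)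
    (hfnorm : dNorm G f = 1)
    (c : V → ℝ) (hc : ∃ k : ℝ, ∀ u, c u = k) (hcnorm : dNorm G c = 1) :
    dInner G (fun w => |f w|) c ^ 2 ≥ 1 - (1 + μ) / (1 - μs ⟨1, by omega⟩) := by
  classical
  have hn1 : 1 < Fintype.card V := by omega
  have hdeg := SpecAux.degree_pos G hconn hn
  have hne : Nonempty V := Fintype.card_pos_iff.mp (by omega)
  obtain ⟨k, hck⟩ := hc
  -- norms
  have hsqrt : ∀ a : V → ℝ, dNorm G a = 1 → dInner G a a = 1 := by
    intro a ha
    have hnn := SpecAux.dInner_self_nonneg G a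
    have := congrArg (fun t => t ^ 2) ha
    simp only [dNorm] at this
    rwa [Real.sq_sqrt hnn, one_pow] at this
  have hff : dInner G f f = 1 := hsqrt f hfnorm
  have hcc : dInner G c c = 1 := hsqrt c hcnorm
  have hk0 : k ≠ 0 := by
    intro hk
    have : dInner G c c = 0 := by
      unfold dInner
      apply Finset.sum_eq_zero
      intro u _
      rw [hck u, hk]
      ring
    rw [hcc] at this
    exact one_ne_zero this
  set g : V → ℝ := fun w => |f w| with hg
  have hgg : dInner G g g = 1 := by
    rw [← hff]
    unfold dInner
    apply Finset.sum_congr rfl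
    intro u _
    rw [hg]
    simp only []
    rw [abs_mul_abs_self]
  set α : ℝ := dInner G g c with hα
  set h : V → ℝ := fun u => g u - α * c u with hh
  -- M c = c
  have hMc : (normAdj G).mulVec c = c := by
    funext u
    rw [SpecAux.normAdj_mulVec]
    have hdu : (0:ℝ) < (G.degree u : ℝ) := by exact_mod_cast hdeg u
    have : ∑ v ∈ G.neighborFinset u, c v = (G.degree u : ℝ) * k := by
      rw [Finset.sum_congr rfl (fun v _ => hck v), Finset.sum_const,
        SimpleGraph.card_neighborFinset_eq_degree, nsmul_eq_mul]
    rw [this, hck u]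
    field_simp
  -- orthogonality
  have hhc : dInner G h c = 0 := by
    rw [hh, SpecAux.dInner_sub_smul_left, ← hα, hcc, mul_one, sub_self]
  have horth : dInner G h (fun _ => (1:ℝ)) = 0 := by
    have : dInner G h c = k * dInner G h (fun _ => (1:ℝ)) := by
      unfold dInner
      rw [Finset.mul_sum]
      apply Finset.sum_congr rfl
      intro u _
      rw [hck u]
      ring
    rw [this] at hhc
    rcases mul_eq_zero.mp hhc with h' | h'
    · exact absurd h' hk0
    · exact h'
  -- dInner h h = 1 - α²
  have hch : dInner G c h = 0 := by rw [SpecAux.dInner_comm', hhc]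
  have hgc : dInner G c g = α := by rw [SpecAux.dInner_comm', ← hα]
  have hhg : dInner G h g = 1 - α * α := by
    rw [hh, SpecAux.dInner_sub_smul_left, hgg, hgc]
  have hhh : dInner G h h = 1 - α ^ 2 := by
    have e1 : dInner G h h = dInner G h g - α * dInner G h c := by
      calc dInner G h h = dInner G (fun u => g u - α * c u) h := by rw [hh]
      _ = dInner G g h - α * dInner G c h := SpecAux.dInner_sub_smul_left G g c h α
      _ = dInner G h g - α * dInner G h c := by
            rw [SpecAux.dInner_comm' G g h, SpecAux.dInner_comm' G c h]
    rw [e1, hhg, hhc]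
    ring
  -- Bform computations
  have hBff : SpecAux.Bform G f f = μ := by
    rw [← SpecAux.dInner_mulVec G hdeg, hfe]
    have : dInner G f (μ • f) = μ * dInner G f f := by
      unfold dInner
      rw [Finset.mul_sum]
      apply Finset.sum_congr rfl
      intro u _
      simp only [Pi.smul_apply, smul_eq_mul]
      ring
    rw [this, hff, mul_one]
  have hBgg : -μ ≤ SpecAux.Bform G g g := by
    have hsum : 0 ≤ SpecAux.Bform G g g + SpecAux.Bform G f f := by
      unfold SpecAux.Bform
      rw [← Finset.sum_add_distrib]
      apply Finset.sum_nonneg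
      intro u _
      rw [← Finset.sum_add_distrib]
      apply Finset.sum_nonneg
      intro v _
      by_cases hadj : G.Adj u v
      · simp only [hadj, if_true, hg]
        have := neg_abs_le (f u * f v)
        rw [abs_mul] at this
        linarith
      · simp [hadj]
    rw [hBff] at hsum
    linarith
  -- dInner h (M h) = Bform g g - α²
  have hMh : (normAdj G).mulVec h =
      fun u => ((normAdj G).mulVec g) u - α * (c u) := by
    funext u
    have e1 : (normAdj G).mulVec h u = (normAdj G).mulVec g u - (normAdj G).mulVec (fun w => α * c w) u := by
      have : h = g - (fun w => α * c w) := by funext w; rw [hh]; rfl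
      rw [this, Matrix.mulVec_sub]
      rfl
    have e2 : (normAdj G).mulVec (fun w => α * c w) = α • ((normAdj G).mulVec c) := by
      have : (fun w => α * c w) = α • c := rfl
      rw [this, Matrix.mulVec_smul]
    rw [e1, e2, hMc]
    rfl
  have hcMg : dInner G c ((normAdj G).mulVec g) = α := by
    rw [SpecAux.dInner_mulVec G hdeg, SpecAux.Bform_comm, ← SpecAux.dInner_mulVec G hdeg, hMc]
  have hhMh : dInner G h ((normAdj G).mulVec h) = SpecAux.Bform G g g - α ^ 2 := by
    rw [hMh]
    have e1 : dInner G h (fun u => ((normAdj G).mulVec g) u - α * (c u))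
        = dInner G (fun u => ((normAdj G).mulVec g) u - α * (c u)) h :=
      SpecAux.dInner_comm' G _ _
    rw [e1, SpecAux.dInner_sub_smul_left]
    have e2 : dInner G ((normAdj G).mulVec g) h = dInner G h ((normAdj G).mulVec g) :=
      SpecAux.dInner_comm' G _ _
    have e3 : dInner G c h = 0 := hch
    rw [e2, e3, mul_zero, sub_zero]
    have e4 : dInner G h ((normAdj G).mulVec g)
        = dInner G g ((normAdj G).mulVec g) - α * dInner G c ((normAdj G).mulVec g) := by
      calc dInner G h ((normAdj G).mulVec g)
          = dInner G (fun u => g u - α * c u) ((normAdj G).mulVec g) := by rw [hh]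
      _ = _ := SpecAux.dInner_sub_smul_left G g c _ α
    rw [e4, hcMg, SpecAux.dInner_mulVec G hdeg]
    ring
  -- spectral bound
  have hspec := SpecAux.spec_bound G hconn hn μs hanti hchar h horth
  have hlt := SpecAux.mu2_lt_one G hconn hn μs hanti hchar
  have hspec' : SpecAux.Bform G g g - α ^ 2 ≤ μs ⟨1, by omega⟩ * (1 - α ^ 2) := by
    calc SpecAux.Bform G g g - α ^ 2 = dInner G h ((normAdj G).mulVec h) := hhMh.symm
    _ ≤ μs ⟨1, by omega⟩ * dInner G h h := hspec
    _ = μs ⟨1, by omega⟩ * (1 - α ^ 2) := by rw [hhh]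
  have hlt' : μs ⟨1, by omega⟩ < 1 := hlt
  have hpos : (0:ℝ) < 1 - μs ⟨1, by omega⟩ := by linarith
  have key : 1 - α ^ 2 ≤ (1 + μ) / (1 - μs ⟨1, by omega⟩) := by
    rw [le_div_iff₀ hpos]
    nlinarith
  have : dInner G g c = α := rfl
  calc dInner G (fun w => |f w|) c ^ 2 = α ^ 2 := rfl
  _ ≥ 1 - (1 + μ) / (1 - μs ⟨1, by omega⟩) := by linarith

end
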